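/- Let n ≥ 2 and B = x eₙ* + eₙ y* ∈ Mₙ(ℂ) with nonzero entries at positions (1,n), (n,1), (n,n), and write its singular value decomposition B = σ₁ u₁ v₁* + σ₂ u₂ v₂*. Then both rank-one summands have nonzero (1,1) entry, i.e., (e₁* u₁)(v₁* e₁) ≠ 0 and (e₁* u₂)(v₂* e₁) ≠ 0. -/

import Mathlib

/-! Let `Bv = σu`, `Bᴴu = τv` with `σ, τ ≠ 0`, `u, v ≠ 0`, where `B = x eₙ* + eₙ y*`. If the
first entry of `u` vanished, the first entry of `Bv = σu` would give `vₙ x₁ = 0`, so `vₙ = 0`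
(as `x₁ = B₁ₙ ≠ 0`) and `σu = (y*v) eₙ` is a multiple of `eₙ`. The `n`-th entry of `Bᴴu = τv`
then reads `0 = uₙ · conj Bₙₙ`, forcing `u = 0`. Since `Bᴴ = y eₙ* + eₙ x*` has the same shape,
the first entry of `v` cannot vanish either. Both pairs of an SVD are such singular pairs. -/

open Matrix

/-- The operator (spectral) norm of a complex matrix, induced by the Euclidean norm on `ℂⁿ`. -/
noncomputable def opNorm {n : ℕ} (A : Matrix (Fin n) (Fin n) ℂ) : ℝ :=
  ‖Matrix.toEuclideanCLM (𝕜 := ℂ) (n := Fin n) A‖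

/-- Birkhoff–James orthogonality of matrices with respect to the operator norm. -/
def BJ {n : ℕ} (A B : Matrix (Fin n) (Fin n) ℂ) : Prop :=
  ∀ c : ℂ, opNorm A ≤ opNorm (A + c • B)

namespace Matrix

variable {ι K : Type*} [DecidableEq ι] [Field K] [StarRing K]

def crossMatrix (N : ι) (x y : ι → K) : Matrix ι ι K :=
  vecMulVec x (star (Pi.single N 1)) + vecMulVec (Pi.single N 1) (star y)

variable {N Z : ι} {x y u v : ι → K}

theorem conjTranspose_crossMatrix (N : ι) (x y : ι → K) :
    (crossMatrix N x y)ᴴ = crossMatrix N y x := by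
  simp [crossMatrix, add_comm]

theorem crossMatrix_apply_of_ne (h : Z ≠ N) : crossMatrix N x y Z N = x Z := by
  simp [crossMatrix, vecMulVec_apply, h]

theorem crossMatrix_apply_self : crossMatrix N x y N N = x N + star (y N) := by
  simp [crossMatrix, vecMulVec_apply]

variable [Fintype ι]

theorem crossMatrix_mulVec (N : ι) (x y v : ι → K) :
    crossMatrix N x y *ᵥ v = v N • x + (star y ⬝ᵥ v) • Pi.single N 1 := by
  simp [crossMatrix, add_mulVec, vecMulVec_mulVec]

theorem crossMatrix_leftSingularVector_apply_ne_zero {σ τ : K} (hZN : Z ≠ N) (hxZ : x Z ≠ 0)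
    (hNN : x N + star (y N) ≠ 0) (hσ : σ ≠ 0) (hu : u ≠ 0)
    (hBv : crossMatrix N x y *ᵥ v = σ • u) (hBu : crossMatrix N y x *ᵥ u = τ • v) :
    u Z ≠ 0 := by
  intro huZ
  rw [crossMatrix_mulVec] at hBv hBu
  have hvN : v N = 0 := by
    simpa [hZN, huZ, hxZ] using congrFun hBv Z
  have hu_single : u = Pi.single N (u N) := by
    ext j
    rcases eq_or_ne j N with rfl | hj
    · simp
    · simpa [hj, hvN, hσ] using (congrFun hBv j).symm
  have huN : u N * star (x N + star (y N)) = 0 := by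
    have hN := congrFun hBu N
    rw [hu_single] at hN
    simp only [Pi.single_eq_same, dotProduct_single, Pi.star_apply, Pi.add_apply,
      Pi.smul_apply, smul_eq_mul, mul_one, hvN, mul_zero] at hN
    rw [star_add, star_star]
    linear_combination hN
  apply hu
  rw [hu_single, (mul_eq_zero.1 huN).resolve_right (star_ne_zero.2 hNN), Pi.single_zero]

theorem crossMatrix_singularPair_apply_ne_zero {B : Matrix ι ι K} {σ τ : K} (hZN : Z ≠ N)
    (hB : B = crossMatrix N x y) (hZ : B Z N ≠ 0) (hZ' : B N Z ≠ 0) (hNN : B N N ≠ 0)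
    (hσ : σ ≠ 0) (hτ : τ ≠ 0) (hu : u ≠ 0) (hv : v ≠ 0)
    (hBv : B *ᵥ v = σ • u) (hBu : Bᴴ *ᵥ u = τ • v) :
    u Z * star (v Z) ≠ 0 := by
  subst hB
  rw [conjTranspose_crossMatrix] at hBu
  have hyZ : y Z ≠ 0 := by
    rw [← crossMatrix_apply_of_ne (x := y) (y := x) hZN, ← conjTranspose_crossMatrix,
      conjTranspose_apply]
    exact star_ne_zero.2 hZ'
  rw [crossMatrix_apply_of_ne hZN] at hZ
  rw [crossMatrix_apply_self] at hNN
  have hNN' : y N + star (x N) ≠ 0 := by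
    simpa [add_comm] using star_ne_zero.2 hNN
  exact mul_ne_zero (crossMatrix_leftSingularVector_apply_ne_zero hZN hZ hNN hσ hu hBv hBu)
    (star_ne_zero.2 (crossMatrix_leftSingularVector_apply_ne_zero hZN hyZ hNN' hτ hv hBu hBv))

end Matrix

section

variable {ι κ K : Type*} [Fintype ι] [Field K] [StarRing K]

theorem smul_vecMulVec_add_smul_vecMulVec_mulVec (a b : K) (u₁ u₂ : κ → K) {v₁ v₂ : ι → K}
    (h₁ : star v₁ ⬝ᵥ v₁ = 1) (h₂₁ : star v₂ ⬝ᵥ v₁ = 0) :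
    (a • vecMulVec u₁ (star v₁) + b • vecMulVec u₂ (star v₂)) *ᵥ v₁ = a • u₁ := by
  simp only [add_mulVec, smul_mulVec, vecMulVec_mulVec, h₁, h₂₁, MulOpposite.op_one,
    MulOpposite.op_zero, one_smul, zero_smul, smul_zero, add_zero]

end

/-- If `B = x eₙ* + eₙ y*` has nonzero `(1,n)`, `(n,1)`, `(n,n)` entries and
`B = σ₁ u₁v₁* + σ₂ u₂v₂*` is an SVD (orthonormal pairs, `σ₁ ≥ σ₂ > 0`), then both
rank-one summands have nonzero `(1,1)` entry. -/
theorem stmt5 {n : ℕ} (hn : 2 ≤ n) (x y : Fin n → ℂ)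
    (B : Matrix (Fin n) (Fin n) ℂ)
    (hB : B = Matrix.vecMulVec x (star (Pi.single (⟨n - 1, by omega⟩ : Fin n) 1)) +
          Matrix.vecMulVec (Pi.single (⟨n - 1, by omega⟩ : Fin n) 1) (star y))
    (h1n : B ⟨0, by omega⟩ ⟨n - 1, by omega⟩ ≠ 0)
    (hn1 : B ⟨n - 1, by omega⟩ ⟨0, by omega⟩ ≠ 0)
    (hnn : B ⟨n - 1, by omega⟩ ⟨n - 1, by omega⟩ ≠ 0)
    (σ₁ σ₂ : ℝ) (u₁ u₂ v₁ v₂ : Fin n → ℂ)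
    (hu₁ : dotProduct (star u₁) u₁ = 1)
    (hu₂ : dotProduct (star u₂) u₂ = 1)
    (hu₁₂ : dotProduct (star u₁) u₂ = 0)
    (hv₁ : dotProduct (star v₁) v₁ = 1)
    (hv₂ : dotProduct (star v₂) v₂ = 1)
    (hv₁₂ : dotProduct (star v₁) v₂ = 0)
    (hσ : σ₂ ≤ σ₁) (hσ₂ : 0 < σ₂)
    (hSVD : B = (σ₁ : ℂ) • Matrix.vecMulVec u₁ (star v₁) +
          (σ₂ : ℂ) • Matrix.vecMulVec u₂ (star v₂)) :
    u₁ ⟨0, by omega⟩ * star (v₁ ⟨0, by omega⟩) ≠ 0 ∧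
      u₂ ⟨0, by omega⟩ * star (v₂ ⟨0, by omega⟩) ≠ 0 := by
  have hZN : (⟨0, by omega⟩ : Fin n) ≠ ⟨n - 1, by omega⟩ := by
    rw [Ne, Fin.mk.injEq]; omega
  have hBH : Bᴴ = (σ₁ : ℂ) • vecMulVec v₁ (star u₁) + (σ₂ : ℂ) • vecMulVec v₂ (star u₂) := by
    simp [hSVD]
  have hu₂₁ : star u₂ ⬝ᵥ u₁ = 0 := by rw [star_dotProduct, hu₁₂, star_zero]
  have hv₂₁ : star v₂ ⬝ᵥ v₁ = 0 := by rw [star_dotProduct, hv₁₂, star_zero]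
  have hσ₁ : (σ₁ : ℂ) ≠ 0 := Complex.ofReal_ne_zero.2 (hσ₂.trans_le hσ).ne'
  have hσ₂ : (σ₂ : ℂ) ≠ 0 := Complex.ofReal_ne_zero.2 hσ₂.ne'
  have hne {w : Fin n → ℂ} (hw : star w ⬝ᵥ w = 1) : w ≠ 0 := by
    rintro rfl; simp at hw
  constructor
  · refine crossMatrix_singularPair_apply_ne_zero hZN hB h1n hn1 hnn hσ₁ hσ₁
      (hne hu₁) (hne hv₁) ?_ ?_
    · rw [hSVD]; exact smul_vecMulVec_add_smul_vecMulVec_mulVec _ _ _ _ hv₁ hv₂₁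
    · rw [hBH]; exact smul_vecMulVec_add_smul_vecMulVec_mulVec _ _ _ _ hu₁ hu₂₁
  · refine crossMatrix_singularPair_apply_ne_zero hZN hB h1n hn1 hnn hσ₂ hσ₂
      (hne hu₂) (hne hv₂) ?_ ?_
    · rw [hSVD, add_comm]; exact smul_vecMulVec_add_smul_vecMulVec_mulVec _ _ _ _ hv₂ hv₁₂
    · rw [hBH, add_comm]; exact smul_vecMulVec_add_smul_vecMulVec_mulVec _ _ _ _ hu₂ hu₁₂
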